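/- Let φ be a ¬-free formula (a formula of biL_{□,◇}) and F a crisp frame. Then F ⊨_{KbiG} φ if and only if F ⊨_{KG²} φ. (KG² is conservative over KbiG on crisp frames.) -/

import Mathlib

/- Truth values: the real unit interval [0,1] with its complete lattice structure
   (so `sInf ∅ = 1` and `sSup ∅ = 0`). -/
instance : Fact ((0:ℝ) ≤ 1) := ⟨zero_le_one⟩

abbrev TV : Type := unitInterval

/-- Gödel implication: `a →G b = 1` if `a ≤ b`, else `b`. -/
noncomputable def gimp (a b : TV) : TV := if a ≤ b then 1 else b

/-- Gödel coimplication: `a ⧀G b = 0` if `a ≤ b`, else `a`. -/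
noncomputable def gcoimp (a b : TV) : TV := if a ≤ b then 0 else a

/-- Formulas of `biL¬_{□,◇}` over the countable variable set `ℕ`. -/
inductive Formula : Type
  | var : ℕ → Formula
  | neg : Formula → Formula
  | and : Formula → Formula → Formula
  | or : Formula → Formula → Formula
  | imp : Formula → Formula → Formula
  | coimp : Formula → Formula → Formula
  | box : Formula → Formula
  | dia : Formula → Formula

/-- KG² valuation pair `(v₁, v₂)` on a crisp frame `(W, R)`:
`(kval R v φ w).1 = v₁(φ,w)` and `(kval R v φ w).2 = v₂(φ,w)`. -/
noncomputable def kval {W : Type} (R : W → W → Prop) (v : ℕ → W → TV × TV) :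
    Formula → W → TV × TV
  | .var p, w => v p w
  | .neg φ, w => ((kval R v φ w).2, (kval R v φ w).1)
  | .and φ ψ, w => ((kval R v φ w).1 ⊓ (kval R v ψ w).1, (kval R v φ w).2 ⊔ (kval R v ψ w).2)
  | .or φ ψ, w => ((kval R v φ w).1 ⊔ (kval R v ψ w).1, (kval R v φ w).2 ⊓ (kval R v ψ w).2)
  | .imp φ ψ, w =>
      (gimp (kval R v φ w).1 (kval R v ψ w).1, gcoimp (kval R v ψ w).2 (kval R v φ w).2)
  | .coimp φ ψ, w =>
      (gcoimp (kval R v φ w).1 (kval R v ψ w).1, gimp (kval R v ψ w).2 (kval R v φ w).2)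
  | .box φ, w =>
      (sInf ((fun w' => (kval R v φ w').1) '' {w' | R w w'}),
       sSup ((fun w' => (kval R v φ w').2) '' {w' | R w w'}))
  | .dia φ, w =>
      (sSup ((fun w' => (kval R v φ w').1) '' {w' | R w w'}),
       sInf ((fun w' => (kval R v φ w').2) '' {w' | R w w'}))

/-- ¬-free formulas: the language `biL_{□,◇}` over the countable variable set `ℕ`. -/
inductive FormulaB : Type
  | var : ℕ → FormulaB
  | and : FormulaB → FormulaB → FormulaB
  | or : FormulaB → FormulaB → FormulaB
  | imp : FormulaB → FormulaB → FormulaB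
  | coimp : FormulaB → FormulaB → FormulaB
  | box : FormulaB → FormulaB
  | dia : FormulaB → FormulaB

/-- KbiG valuation on a crisp frame `(W, R)` (`inf ∅ = 1`, `sup ∅ = 0`). -/
noncomputable def bval {W : Type} (R : W → W → Prop) (v : ℕ → W → TV) :
    FormulaB → W → TV
  | .var p, w => v p w
  | .and φ ψ, w => bval R v φ w ⊓ bval R v ψ w
  | .or φ ψ, w => bval R v φ w ⊔ bval R v ψ w
  | .imp φ ψ, w => gimp (bval R v φ w) (bval R v ψ w)
  | .coimp φ ψ, w => gcoimp (bval R v φ w) (bval R v ψ w)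
  | .box φ, w => sInf ((fun w' => bval R v φ w') '' {w' | R w w'})
  | .dia φ, w => sSup ((fun w' => bval R v φ w') '' {w' | R w w'})

/-- Embedding of the ¬-free language `biL_{□,◇}` into `biL¬_{□,◇}`. -/
def FormulaB.emb : FormulaB → Formula
  | .var p => .var p
  | .and φ ψ => .and φ.emb ψ.emb
  | .or φ ψ => .or φ.emb ψ.emb
  | .imp φ ψ => .imp φ.emb ψ.emb
  | .coimp φ ψ => .coimp φ.emb ψ.emb
  | .box φ => .box φ.emb
  | .dia φ => .dia φ.emb


/-!
On ¬-free formulas the KG² component `v₁` is computed exactly as a KbiG valuation, and so is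
`v₂` after reflecting `[0,1]` by `σ t = 1 - t`: this order-reversing involution exchanges
`min`/`max` and `inf`/`sup` and turns `a →G b` into `σ b ⧀G σ a`, which are precisely the clauses
defining `v₂`. Hence `v₁(φ) = 1` and `v₂(φ) = σ 1 = 0` for KbiG-valid `φ`; conversely any KbiG
valuation is the `v₁` of a KG² model (take `v₂ = 0`).
-/

namespace unitInterval

def symmOrderIso : TV ≃o TVᵒᵈ where
  toFun t := OrderDual.toDual (σ t)
  invFun t := σ (OrderDual.ofDual t)
  left_inv := symm_symm
  right_inv := symm_symm
  map_rel_iff' := symm_le_symm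

lemma symm_inf (a b : TV) : σ (a ⊓ b) = σ a ⊔ σ b :=
  symmOrderIso.map_inf a b

lemma symm_sup (a b : TV) : σ (a ⊔ b) = σ a ⊓ σ b :=
  symmOrderIso.map_sup a b

lemma symm_sInf_image {ι : Type*} (f : ι → TV) (s : Set ι) :
    σ (sInf (f '' s)) = sSup ((fun i => σ (f i)) '' s) := by
  rw [sInf_image, sSup_image]
  exact symmOrderIso.map_iInf₂ _

lemma symm_sSup_image {ι : Type*} (f : ι → TV) (s : Set ι) :
    σ (sSup (f '' s)) = sInf ((fun i => σ (f i)) '' s) := by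
  rw [sSup_image, sInf_image]
  exact symmOrderIso.map_iSup₂ _

lemma symm_gimp (a b : TV) : σ (gimp a b) = gcoimp (σ b) (σ a) := by
  by_cases h : a ≤ b <;> simp [gimp, gcoimp, h, symm_le_symm]

lemma symm_gcoimp (a b : TV) : σ (gcoimp a b) = gimp (σ b) (σ a) := by
  by_cases h : a ≤ b <;> simp [gimp, gcoimp, h, symm_le_symm]

end unitInterval

open unitInterval

section

variable {W : Type} (R : W → W → Prop) (v : ℕ → W → TV × TV)

lemma kval_emb_fst (φ : FormulaB) (w : W) :
    (kval R v φ.emb w).1 = bval R (fun p w => (v p w).1) φ w := by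
  induction φ generalizing w <;> simp_all [FormulaB.emb, kval, bval]

lemma kval_emb_snd (φ : FormulaB) (w : W) :
    (kval R v φ.emb w).2 = σ (bval R (fun p w => σ (v p w).2) φ w) := by
  induction φ generalizing w <;>
    simp_all [FormulaB.emb, kval, bval, symm_inf, symm_sup, symm_gimp, symm_gcoimp,
      symm_sInf_image, symm_sSup_image]

end

theorem stmt2 {W : Type} (R : W → W → Prop) (φ : FormulaB) :
    (∀ (v : ℕ → W → TV) (w : W), bval R v φ w = 1) ↔
    (∀ (v : ℕ → W → TV × TV) (w : W),
      (kval R v φ.emb w).1 = 1 ∧ (kval R v φ.emb w).2 = 0) := by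
  constructor
  · intro h v w
    rw [kval_emb_fst, kval_emb_snd, h, h, symm_one]
    exact ⟨rfl, rfl⟩
  · intro h v w
    simpa only [kval_emb_fst] using (h (fun p w => (v p w, 0)) w).1
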